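/- arXiv:1601.05560 — 5 statements merged into one kernel-verified Lean document; each statement's English description precedes it below -/
import Mathlib

section
/- Let a, b, c ∈ ℝ. If a·x² + b·log(x²) + c = 0 holds for three distinct positive values of x, then a = b = c = 0. -/
/-!
Substituting `t = x²`, the points `t` are distinct and positive. If `b ≠ 0`, the strictly concave
function `t ↦ log t + (a / b) t` would take the value `-c / b` at three distinct points, which is
impossible because one of them lies strictly between the other two. Hence `b = 0`, and the affine
function `a t + c` has two distinct zeros.
-/

open Set Real

section LinearOrderedField

variable {𝕜 β : Type*} [Field 𝕜] [LinearOrder 𝕜] [IsStrictOrderedRing 𝕜]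

lemma exists_mem_openSegment_of_pairwise_ne {x y z : 𝕜} (hxy : x ≠ y) (hxz : x ≠ z)
    (hyz : y ≠ z) :
    x ∈ openSegment 𝕜 y z ∨ y ∈ openSegment 𝕜 x z ∨ z ∈ openSegment 𝕜 x y := by
  rw [openSegment_eq_Ioo' hyz, openSegment_eq_Ioo' hxz, openSegment_eq_Ioo' hxy]
  rcases hxy.lt_or_gt with hxy | hxy <;> rcases hxz.lt_or_gt with hxz | hxz <;>
    rcases hyz.lt_or_gt with hyz | hyz <;> simp [*, hxy.le, hxz.le, hyz.le] <;> linarith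

theorem StrictConcaveOn.apply_ne_of_apply_eq_of_apply_eq [AddCommMonoid β] [LinearOrder β]
    [IsOrderedAddMonoid β] [Module 𝕜 β] [PosSMulStrictMono 𝕜 β] {s : Set 𝕜} {f : 𝕜 → β}
    (hf : StrictConcaveOn 𝕜 s f) {x y z : 𝕜} {r : β} (hx : x ∈ s) (hy : y ∈ s) (hz : z ∈ s)
    (hxy : x ≠ y) (hxz : x ≠ z) (hyz : y ≠ z) (hfx : f x = r) (hfy : f y = r) : f z ≠ r := by
  intro hfz
  rcases exists_mem_openSegment_of_pairwise_ne hxy hxz hyz with h | h | h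
  · simpa [hfx, hfy, hfz] using hf.lt_on_openSegment hy hz hyz h
  · simpa [hfx, hfy, hfz] using hf.lt_on_openSegment hx hz hxz h
  · simpa [hfx, hfy, hfz] using hf.lt_on_openSegment hx hy hxy h

end LinearOrderedField

lemma strictConcaveOn_log_add_mul (k : ℝ) :
    StrictConcaveOn ℝ (Ioi 0) (fun t ↦ log t + k * t) :=
  strictConcaveOn_log_Ioi.add_concaveOn (LinearMap.concaveOn (LinearMap.mul ℝ ℝ k) (convex_Ioi 0))

theorem eq_zero_of_mul_add_mul_log_add_eq_zero {a b c u v w : ℝ}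
    (hu : 0 < u) (hv : 0 < v) (hw : 0 < w) (huv : u ≠ v) (huw : u ≠ w) (hvw : v ≠ w)
    (h₁ : a * u + b * log u + c = 0) (h₂ : a * v + b * log v + c = 0)
    (h₃ : a * w + b * log w + c = 0) :
    a = 0 ∧ b = 0 ∧ c = 0 := by
  have hb : b = 0 := by
    by_contra hb
    have level : ∀ t, a * t + b * log t + c = 0 → log t + a / b * t = -c / b := by
      intro t ht
      field_simp
      linarith
    exact (strictConcaveOn_log_add_mul (a / b)).apply_ne_of_apply_eq_of_apply_eq hu hv hw
      huv huw hvw (level u h₁) (level v h₂) (level w h₃)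
  subst hb
  have ha : a = 0 := by
    have : a * (u - v) = 0 := by linarith
    simpa [sub_ne_zero.2 huv] using this
  subst ha
  exact ⟨rfl, rfl, by linarith⟩

/-- If a·x² + b·log(x²) + c = 0 holds for three distinct positive values of x,
then a = b = c = 0. -/
theorem stmt2 (a b c : ℝ) (x y z : ℝ) (hx : 0 < x) (hy : 0 < y) (hz : 0 < z)
    (hxy : x ≠ y) (hxz : x ≠ z) (hyz : y ≠ z)
    (h1 : a * x ^ 2 + b * Real.log (x ^ 2) + c = 0)
    (h2 : a * y ^ 2 + b * Real.log (y ^ 2) + c = 0)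
    (h3 : a * z ^ 2 + b * Real.log (z ^ 2) + c = 0) :
    a = 0 ∧ b = 0 ∧ c = 0 := by
  have sq_ne {s t : ℝ} (hs : 0 < s) (ht : 0 < t) (hst : s ≠ t) : s ^ 2 ≠ t ^ 2 :=
    (pow_left_inj₀ hs.le ht.le two_ne_zero).not.2 hst
  exact eq_zero_of_mul_add_mul_log_add_eq_zero (by positivity) (by positivity) (by positivity)
    (sq_ne hx hy hxy) (sq_ne hx hz hxz) (sq_ne hy hz hyz) h1 h2 h3
end

section
/- Let X be a real random variable, B a real random variable, and suppose a(X) = B + c(X)·L almost surely, where X is independent of (B, L), a and c are measurable real functions with a(X), c(X) square-integrable, and L is a real random variable. If Var(a(X)) , Var(c(X)) and Cov(a(X), c(X)) are such that Var(c(X)) > 0, then L takes almost surely at most two values, namely the roots of the quadratic t ↦ Var(c(X))·t² − 2·Cov(a(X),c(X))·t + Var(a(X)). -/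
open MeasureTheory ProbabilityTheory

/-!
By independence, the law of `((B, L), X)` is a product measure, so for almost every value
`(b, l)` of `(B, L)` the identity `a = b + c · l` holds almost everywhere for the law `ν` of `X`.
For such `l`, `Cov_ν(a, c) = l · Var_ν(c)` and `Var_ν(a) = l² · Var_ν(c)`, which makes `l` a root
of the quadratic. Finally, the moments of `a` and `c` under `ν` are those of `a(X)` and `c(X)`.
-/

lemma covariance_congr_left {α : Type*} [MeasurableSpace α] {ν : Measure α} {f f' g : α → ℝ}
    (h : f =ᵐ[ν] f') : cov[f, g; ν] = cov[f', g; ν] := by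
  simp only [covariance, integral_congr_ae h]
  exact integral_congr_ae (h.mono fun x hx => by simp only [hx])

lemma variance_mul_sq_sub_two_mul_covariance_mul_add_variance_eq_zero_of_ae_eq {α : Type*}
    [MeasurableSpace α] {ν : Measure α} [IsProbabilityMeasure ν] {f g : α → ℝ}
    (hg : Integrable g ν) {b l : ℝ} (hfg : f =ᵐ[ν] fun x => b + g x * l) :
    Var[g; ν] * l ^ 2 - 2 * cov[f, g; ν] * l + Var[f; ν] = 0 := by
  have hcov : cov[f, g; ν] = Var[g; ν] * l := by
    rw [covariance_congr_left hfg, covariance_const_add_left (hg.mul_const l),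
      covariance_mul_const_left, covariance_self hg.aemeasurable]
  have hvar : Var[f; ν] = Var[g; ν] * l ^ 2 := by
    rw [variance_congr hfg, variance_const_add (hg.aestronglyMeasurable.mul_const l),
      variance_mul_const]
  rw [hcov, hvar]
  ring

lemma ProbabilityTheory.IndepFun.ae_ae_map_of_ae {Ω α β : Type*} [MeasurableSpace Ω]
    [MeasurableSpace α] [MeasurableSpace β] {μ : Measure Ω} [IsFiniteMeasure μ]
    {X : Ω → α} {Y : Ω → β}
    (hXY : IndepFun X Y μ) (hX : AEMeasurable X μ) (hY : AEMeasurable Y μ)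
    {p : α → β → Prop} (hp : MeasurableSet {q : α × β | p q.1 q.2})
    (h : ∀ᵐ ω ∂μ, p (X ω) (Y ω)) : ∀ᵐ ω ∂μ, ∀ᵐ x ∂(μ.map X), p x (Y ω) := by
  have hmap : μ.map (fun ω => (Y ω, X ω)) = (μ.map Y).prod (μ.map X) :=
    (indepFun_iff_map_prod_eq_prod_map_map hY hX).1 hXY.symm
  have hprod : ∀ᵐ q ∂(μ.map Y).prod (μ.map X), p q.2 q.1 := by
    rw [← hmap]
    exact (ae_map_iff (hY.prodMk hX) (p := fun q => p q.2 q.1)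
      (hp.preimage measurable_swap)).2 h
  exact ae_of_ae_map hY (Measure.ae_ae_of_ae_prod hprod)

theorem stmt3_general {Ω : Type*} [MeasurableSpace Ω] (μ : Measure Ω) [IsProbabilityMeasure μ]
    (X B L : Ω → ℝ) (a c : ℝ → ℝ)
    (hX : Measurable X) (hB : AEMeasurable B μ) (hL : AEMeasurable L μ)
    (ha : Measurable a) (hc : Measurable c)
    (haX : MemLp (fun ω => a (X ω)) 2 μ) (hcX : MemLp (fun ω => c (X ω)) 2 μ)
    (hindep : IndepFun X (fun ω => (B ω, L ω)) μ)
    (heq : ∀ᵐ ω ∂μ, a (X ω) = B ω + c (X ω) * L ω) :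
    ∀ᵐ ω ∂μ,
      variance (fun ω => c (X ω)) μ * (L ω) ^ 2
        - 2 * ((∫ ω, a (X ω) * c (X ω) ∂μ)
                - (∫ ω, a (X ω) ∂μ) * (∫ ω, c (X ω) ∂μ)) * L ω
        + variance (fun ω => a (X ω)) μ = 0 := by
  have : IsProbabilityMeasure (μ.map X) := Measure.isProbabilityMeasure_map hX.aemeasurable
  have hcν : Integrable c (μ.map X) :=
    (integrable_map_measure hc.aestronglyMeasurable hX.aemeasurable).2 (hcX.integrable one_le_two)
  have hcov : (∫ ω, a (X ω) * c (X ω) ∂μ) - (∫ ω, a (X ω) ∂μ) * (∫ ω, c (X ω) ∂μ)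
      = cov[a, c; μ.map X] := by
    rw [covariance_map_fun ha.aestronglyMeasurable hc.aestronglyMeasurable hX.aemeasurable]
    exact (covariance_eq_sub haX hcX).symm
  have hVa : Var[fun ω => a (X ω); μ] = Var[a; μ.map X] :=
    (variance_map ha.aemeasurable hX.aemeasurable).symm
  have hVc : Var[fun ω => c (X ω); μ] = Var[c; μ.map X] :=
    (variance_map hc.aemeasurable hX.aemeasurable).symm
  rw [hcov, hVa, hVc]
  have hrel : ∀ᵐ ω ∂μ, ∀ᵐ x ∂(μ.map X), a x = B ω + c x * L ω :=
    hindep.ae_ae_map_of_ae hX.aemeasurable (hB.prodMk hL) (p := fun x q => a x = q.1 + c x * q.2)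
      (measurableSet_eq_fun (ha.comp measurable_fst)
        (measurable_snd.fst.add ((hc.comp measurable_fst).mul measurable_snd.snd))) heq
  filter_upwards [hrel] with ω hω
  exact variance_mul_sq_sub_two_mul_covariance_mul_add_variance_eq_zero_of_ae_eq hcν hω

/-- If a(X) = B + c(X)·L a.s. with X independent of (B, L) and Var(c(X)) > 0, then L is
almost surely a root of the quadratic t ↦ Var(c(X))·t² − 2·Cov(a(X),c(X))·t + Var(a(X))
(so L takes at most two values a.s.). -/
theorem stmt3 {Ω : Type*} [MeasurableSpace Ω] (μ : Measure Ω) [IsProbabilityMeasure μ]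
    (X B L : Ω → ℝ) (a c : ℝ → ℝ)
    (hX : Measurable X) (hB : AEMeasurable B μ) (hL : AEMeasurable L μ)
    (ha : Measurable a) (hc : Measurable c)
    (haX : MemLp (fun ω => a (X ω)) 2 μ) (hcX : MemLp (fun ω => c (X ω)) 2 μ)
    (hindep : IndepFun X (fun ω => (B ω, L ω)) μ)
    (heq : ∀ᵐ ω ∂μ, a (X ω) = B ω + c (X ω) * L ω)
    (hvar : 0 < variance (fun ω => c (X ω)) μ) :
    ∀ᵐ ω ∂μ,
      variance (fun ω => c (X ω)) μ * (L ω) ^ 2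
        - 2 * ((∫ ω, a (X ω) * c (X ω) ∂μ)
                - (∫ ω, a (X ω) ∂μ) * (∫ ω, c (X ω) ∂μ)) * L ω
        + variance (fun ω => a (X ω)) μ = 0 :=
  stmt3_general μ X B L a c hX hB hL ha hc haX hcX hindep heq
end

section
/- Let γ ∈ ℝ, let η̃_t be iid real random variables with E exp(s₀|η̃₁|) < ∞ for some s₀ > 0, and let α ≠ 0 satisfy γ/α < s₀. Define η_t = e^{c/2} e^{(γ/(2α))|η̃_t|} sign(η̃_t) where c = −log E e^{(γ/α)|η̃₁|}. Then E η_t² = 1 and log η_t² = c + (γ/α)|η̃_t|, so that α·log η_t² = α c + γ|η̃_t|. -/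
open MeasureTheory

/-- Construction of Log-GARCH innovations from EGARCH innovations (symmetric case of
Proposition 1(i)): with c = −log E e^{(γ/α)|η̃|} and
η = e^{c/2} e^{(γ/(2α))|η̃|} sign(η̃), one has E η² = 1, log η² = c + (γ/α)|η̃| and
α·log η² = αc + γ|η̃|. -/
theorem stmt5 {Ω : Type*} [MeasurableSpace Ω] (μ : Measure Ω) [IsProbabilityMeasure μ]
    (ηt : Ω → ℝ) (hmeas : Measurable ηt)
    (s₀ γ α : ℝ) (hs₀ : 0 < s₀)
    (hint : Integrable (fun ω => Real.exp (s₀ * |ηt ω|)) μ)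
    (hα : α ≠ 0) (hγα : γ / α < s₀)
    (c : ℝ) (hc : c = - Real.log (∫ ω, Real.exp ((γ / α) * |ηt ω|) ∂μ))
    (η : Ω → ℝ)
    (hη : ∀ ω, η ω = Real.exp (c / 2) * Real.exp ((γ / (2 * α)) * |ηt ω|)
        * (if 0 ≤ ηt ω then (1 : ℝ) else -1)) :
    (∫ ω, (η ω) ^ 2 ∂μ) = 1 ∧
    (∀ ω, Real.log ((η ω) ^ 2) = c + (γ / α) * |ηt ω|) ∧
    (∀ ω, α * Real.log ((η ω) ^ 2) = α * c + γ * |ηt ω|) := by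
  have hsq : ∀ ω, (η ω) ^ 2 = Real.exp (c + (γ / α) * |ηt ω|) := by
    intro ω
    rw [hη ω]
    have h1 : ((if 0 ≤ ηt ω then (1 : ℝ) else -1)) ^ 2 = 1 := by
      split <;> norm_num
    rw [mul_pow, mul_pow, h1, mul_one, ← Real.exp_nat_mul, ← Real.exp_nat_mul,
      ← Real.exp_add]
    congr 1
    field_simp
    ring
  have hlog : ∀ ω, Real.log ((η ω) ^ 2) = c + (γ / α) * |ηt ω| := by
    intro ω; rw [hsq ω, Real.log_exp]
  refine ⟨?_, hlog, fun ω => by rw [hlog ω]; field_simp⟩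
  -- integrability of exp((γ/α)|ηt|)
  have hIint : Integrable (fun ω => Real.exp ((γ / α) * |ηt ω|)) μ := by
    refine hint.mono ((hmeas.abs.const_mul _).exp.aestronglyMeasurable) ?_
    filter_upwards with ω
    rw [Real.norm_eq_abs, Real.norm_eq_abs, Real.abs_exp, Real.abs_exp, Real.exp_le_exp]
    exact mul_le_mul_of_nonneg_right hγα.le (abs_nonneg _)
  have hIpos : 0 < ∫ ω, Real.exp ((γ / α) * |ηt ω|) ∂μ := by
    refine integral_pos_iff_support_of_nonneg (fun ω => (Real.exp_pos _).le) hIint |>.mpr ?_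
    have : (Function.support fun ω => Real.exp ((γ / α) * |ηt ω|)) = Set.univ := by
      ext ω; simp [Function.support, (Real.exp_pos _).ne']
    rw [this]; simp
  have : (∫ ω, (η ω) ^ 2 ∂μ) = Real.exp c * ∫ ω, Real.exp ((γ / α) * |ηt ω|) ∂μ := by
    rw [← integral_const_mul]
    refine integral_congr_ae (Filter.Eventually.of_forall fun ω => ?_)
    show (η ω) ^ 2 = _
    rw [hsq ω, Real.exp_add]
  rw [this, hc, Real.exp_neg, Real.exp_log hIpos, inv_mul_cancel₀ hIpos.ne']
end

section
/- Let (σ_t²) satisfy the symmetric EGARCH(1,1) recursion log σ_t² = ω̃ + γ|η̃_{t−1}| + β̃ log σ_{t−1}², where γ > 0 and (η̃_t) is iid with E e^{s₀|η̃₁|} < ∞ for some s₀ > γ. Pick any α with 0 < γ/α < s₀, set η_t = e^{c/2} e^{(γ/(2α))|η̃_t|} sign(η̃_t) with c chosen so that E η_t² = 1, and set ω = ω̃ − α c and β = β̃ − α. Then the same volatility process satisfies the Log-GARCH(1,1) recursion log σ_t² = ω + α log ε_{t−1}² + β log σ_{t−1}², where ε_t = σ_t η_t. -/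
open MeasureTheory

/-- A symmetric EGARCH(1,1) volatility process also satisfies a Log-GARCH(1,1) recursion:
with η_t = e^{c/2} e^{(γ/(2α))|η̃_t|} sign(η̃_t) (c chosen so that E η_t² = 1),
ω = ω̃ − αc and β = β̃ − α, the same volatility satisfies
log σ_t² = ω + α log ε_{t−1}² + β log σ_{t−1}² where ε_t = σ_t η_t. -/
theorem stmt6 {Ω : Type*} [MeasurableSpace Ω] (μ : Measure Ω) [IsProbabilityMeasure μ]
    (ηt : ℤ → Ω → ℝ) (hmeas : ∀ t, Measurable (ηt t))
    (ω' γ β' s₀ α c : ℝ) (hγ : 0 < γ) (hs₀ : γ < s₀)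
    (hint : ∀ t, Integrable (fun x => Real.exp (s₀ * |ηt t x|)) μ)
    (hα1 : 0 < γ / α) (hα2 : γ / α < s₀)
    (logσ : ℤ → Ω → ℝ)
    (hrec : ∀ t : ℤ, ∀ x : Ω,
      logσ t x = ω' + γ * |ηt (t - 1) x| + β' * logσ (t - 1) x)
    (η : ℤ → Ω → ℝ)
    (hη : ∀ t x, η t x = Real.exp (c / 2) * Real.exp ((γ / (2 * α)) * |ηt t x|)
        * (if 0 ≤ ηt t x then (1 : ℝ) else -1))
    (hc : ∀ t, (∫ x, (η t x) ^ 2 ∂μ) = 1) :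
    ∀ t : ℤ, ∀ x : Ω,
      logσ t x
        = (ω' - α * c)
          + α * Real.log ((Real.exp (logσ (t - 1) x / 2) * η (t - 1) x) ^ 2)
          + (β' - α) * logσ (t - 1) x := by
  intro t x
  have hα : α ≠ 0 := by
    intro h; rw [h, div_zero] at hα1; exact lt_irrefl 0 hα1
  have hsq : (Real.exp (logσ (t - 1) x / 2) * η (t - 1) x) ^ 2
      = Real.exp (logσ (t - 1) x + c + (γ / α) * |ηt (t - 1) x|) := by
    rw [hη]
    have hs : ((if 0 ≤ ηt (t - 1) x then (1 : ℝ) else -1)) ^ 2 = 1 := by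
      split <;> norm_num
    rw [← Real.exp_add, mul_pow, mul_pow, hs, mul_one,
      ← Real.exp_nat_mul, ← Real.exp_nat_mul, ← Real.exp_add]
    congr 1
    push_cast
    field_simp
    ring
  rw [hsq, Real.log_exp, hrec t x]
  have : α * ((γ / α) * |ηt (t - 1) x|) = γ * |ηt (t - 1) x| := by
    field_simp
  nlinarith [this]
end

section
/- Let η be a real random variable, independent of the pair of real random variables (S, R) with S > 0 a.s., and suppose c·log(η²) + c·log S + R = 0 almost surely on {η > 0}, where c ∈ ℝ is constant. If the support of η contains at least two distinct positive values, then c = 0 and R + c log S = 0 a.s., hence R = 0 a.s. -/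
open MeasureTheory ProbabilityTheory

/-- `x` lies in the support of the law of `η` under `μ`. -/
def InSupport {Ω : Type*} [MeasurableSpace Ω] (μ : Measure Ω) (η : Ω → ℝ) (x : ℝ) : Prop :=
  ∀ ε : ℝ, 0 < ε → 0 < μ (η ⁻¹' Set.Ioo (x - ε) (x + ε))

/-- Core step: if `z > 0` is in the support of `η`, then a.s.
`c log z² + c log S + R = 0`. -/
theorem aux_const {Ω : Type*} [MeasurableSpace Ω] (μ : Measure Ω) [IsProbabilityMeasure μ]
    (η S R : Ω → ℝ) (hη : Measurable η) (hS : Measurable S) (hR : Measurable R)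
    (hindep : IndepFun η (fun ω => (S ω, R ω)) μ)
    (c : ℝ)
    (heq : ∀ᵐ ω ∂μ, 0 < η ω →
      c * Real.log ((η ω) ^ 2) + c * Real.log (S ω) + R ω = 0)
    (z : ℝ) (hz : 0 < z) (hsz : InSupport μ η z) :
    ∀ᵐ ω ∂μ, c * Real.log (z ^ 2) + c * Real.log (S ω) + R ω = 0 := by
  by_contra hcon
  rw [ae_iff] at hcon
  -- the bad set has positive measure; find δ > 0 slice with positive measure
  have hBmeas : ∀ δ : ℝ, MeasurableSet {ω | δ ≤ |c * Real.log (z ^ 2) + c * Real.log (S ω) + R ω|} := by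
    intro δ
    have : Measurable fun ω => |c * Real.log (z ^ 2) + c * Real.log (S ω) + R ω| :=
      (((measurable_const.add ((hS.log).const_mul c))).add hR).abs
    exact measurableSet_le measurable_const this
  have hsub : {ω | ¬ c * Real.log (z ^ 2) + c * Real.log (S ω) + R ω = 0} ⊆
      ⋃ n : ℕ, {ω | 1/(n+1 : ℝ) ≤ |c * Real.log (z ^ 2) + c * Real.log (S ω) + R ω|} := by
    intro ω hω
    have habs : 0 < |c * Real.log (z ^ 2) + c * Real.log (S ω) + R ω| := abs_pos.mpr hω
    obtain ⟨n, hn⟩ := exists_nat_one_div_lt habs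
    exact Set.mem_iUnion.mpr ⟨n, le_of_lt hn⟩
  have : ∃ n : ℕ, 0 < μ {ω | 1/(n+1 : ℝ) ≤ |c * Real.log (z ^ 2) + c * Real.log (S ω) + R ω|} := by
    by_contra h
    push_neg at h
    have h0 : ∀ n : ℕ, μ {ω | 1/(n+1 : ℝ) ≤ |c * Real.log (z ^ 2) + c * Real.log (S ω) + R ω|} = 0 :=
      fun n => le_antisymm (h n) zero_le
    have := measure_mono_null hsub (measure_iUnion_null h0)
    exact hcon this
  obtain ⟨n, hn⟩ := this
  set δ : ℝ := 1/(n+1 : ℝ) with hδdef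
  have hδ : 0 < δ := by positivity
  -- continuity of t ↦ c log t² at z
  have hcont : ContinuousAt (fun t : ℝ => c * Real.log (t ^ 2)) z := by
    have : ContinuousAt Real.log (z ^ 2) := Real.continuousAt_log (by positivity)
    have hsq : ContinuousAt (fun t : ℝ => t ^ 2) z := (continuous_pow 2).continuousAt
    have h2 : ContinuousAt (fun t : ℝ => Real.log (t ^ 2)) z := hsq.log (by positivity)
    exact continuousAt_const.mul h2
  rw [Metric.continuousAt_iff] at hcont
  obtain ⟨ε₀, hε₀, hball⟩ := hcont δ hδ
  set ε : ℝ := min ε₀ z with hεdef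
  have hε : 0 < ε := lt_min hε₀ hz
  -- the two events
  set A : Set Ω := η ⁻¹' Set.Ioo (z - ε) (z + ε) with hAdef
  set C : Set (ℝ × ℝ) := {p : ℝ × ℝ | δ ≤ |c * Real.log (z ^ 2) + c * Real.log p.1 + p.2|} with hCdef
  have hCmeas : MeasurableSet C := by
    have : Measurable fun p : ℝ × ℝ => |c * Real.log (z ^ 2) + c * Real.log p.1 + p.2| :=
      ((measurable_const.add ((measurable_fst.log).const_mul c)).add measurable_snd).abs
    exact measurableSet_le measurable_const this
  have hA : 0 < μ A := hsz ε hε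
  have hB : 0 < μ ((fun ω => (S ω, R ω)) ⁻¹' C) := hn
  have hprod := hindep.measure_inter_preimage_eq_mul (Set.Ioo (z - ε) (z + ε)) C
    measurableSet_Ioo hCmeas
  have hABpos : 0 < μ (A ∩ (fun ω => (S ω, R ω)) ⁻¹' C) := by
    rw [hAdef, hprod]
    exact ENNReal.mul_pos (ne_of_gt hA) (ne_of_gt hB)
  -- but A ∩ B is contained in the null set where heq fails
  have hnull : μ {ω | ¬ (0 < η ω →
      c * Real.log ((η ω) ^ 2) + c * Real.log (S ω) + R ω = 0)} = 0 := by
    rw [← ae_iff]; exact heq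
  have hsub2 : A ∩ (fun ω => (S ω, R ω)) ⁻¹' C ⊆ {ω | ¬ (0 < η ω →
      c * Real.log ((η ω) ^ 2) + c * Real.log (S ω) + R ω = 0)} := by
    rintro ω ⟨hωA, hωC⟩
    have hη1 : z - ε < η ω := hωA.1
    have hη2 : η ω < z + ε := hωA.2
    have hηpos : 0 < η ω := by
      have : (0:ℝ) ≤ z - ε := by
        have : ε ≤ z := min_le_right _ _
        linarith
      linarith
    have hdist : dist (η ω) z < ε₀ := by
      rw [Real.dist_eq, abs_lt]
      have h1 : ε ≤ ε₀ := min_le_left _ _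
      constructor <;> linarith
    have hclose : |c * Real.log ((η ω) ^ 2) - c * Real.log (z ^ 2)| < δ := by
      have := hball hdist
      rwa [Real.dist_eq] at this
    have hfar : δ ≤ |c * Real.log (z ^ 2) + c * Real.log (S ω) + R ω| := hωC
    intro h
    have h0 := h hηpos
    have : c * Real.log (z ^ 2) + c * Real.log (S ω) + R ω =
        (c * Real.log (z ^ 2) - c * Real.log ((η ω) ^ 2)) +
          (c * Real.log ((η ω) ^ 2) + c * Real.log (S ω) + R ω) := by ring
    rw [this, h0, add_zero, abs_sub_comm] at hfar
    linarith
  exact absurd (measure_mono_null hsub2 hnull) (ne_of_gt hABpos)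

/-- Identifiability step: if η is independent of (S,R) with S > 0 a.s.,
c·log(η²) + c·log S + R = 0 a.s. on {η > 0}, and the support of η contains two distinct
positive values, then c = 0 and R = 0 a.s. -/
theorem stmt15 {Ω : Type*} [MeasurableSpace Ω] (μ : Measure Ω) [IsProbabilityMeasure μ]
    (η S R : Ω → ℝ) (hη : Measurable η) (hS : Measurable S) (hR : Measurable R)
    (hSpos : ∀ᵐ ω ∂μ, 0 < S ω)
    (hindep : IndepFun η (fun ω => (S ω, R ω)) μ)
    (c : ℝ)
    (heq : ∀ᵐ ω ∂μ, 0 < η ω →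
      c * Real.log ((η ω) ^ 2) + c * Real.log (S ω) + R ω = 0)
    (x y : ℝ) (hx : 0 < x) (hy : 0 < y) (hxy : x ≠ y)
    (hsx : InSupport μ η x) (hsy : InSupport μ η y) :
    c = 0 ∧ (∀ᵐ ω ∂μ, R ω = 0) := by
  have hax := aux_const μ η S R hη hS hR hindep c heq x hx hsx
  have hay := aux_const μ η S R hη hS hR hindep c heq y hy hsy
  have hc : c = 0 := by
    have hboth := hax.and hay
    obtain ⟨ω, h1, h2⟩ := hboth.exists
    have hlog : c * Real.log (x ^ 2) = c * Real.log (y ^ 2) := by linarith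
    by_contra hc0
    have : Real.log (x ^ 2) = Real.log (y ^ 2) := mul_left_cancel₀ hc0 hlog
    have hx2 : x ^ 2 = y ^ 2 := Real.log_injOn_pos (by simp; positivity) (by simp; positivity) this
    have : x = y := by nlinarith
    exact hxy this
  refine ⟨hc, ?_⟩
  filter_upwards [hax] with ω h
  simpa [hc] using h
end
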